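/- arXiv:1904.03703 — 2 statements merged into one kernel-verified Lean document; each statement's English description precedes it below -/
import Mathlib

section
/- Let η : [0,∞) → ℝ be continuous, piecewise linear on each interval [n, n+1], with η(θ) ≥ 1/(2l) for all θ, and suppose its right derivative satisfies D⁺η(θ) ≤ A √η(θ) e^{-√(2η(θ)/K)} for all θ ≥ 0, with constants A, K > 0. Then η(θ) ≤ (K/2)[log(e^{√(2η(0)/K)} + A·√(2/K)·θ)]² for all θ ≥ 0. -/
open Real

/-- Logarithmic upper bound for a piecewise linear function whose right derivative
satisfies `D⁺η ≤ A √η e^{-√(2η/K)}`. -/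
theorem stmt_5 (l : ℕ) (hl : 2 ≤ l) (A K : ℝ) (hA : 0 < A) (hK : 0 < K)
    (η : ℝ → ℝ) (hcont : ContinuousOn η (Set.Ici (0 : ℝ)))
    (hpl : ∀ n : ℕ, ∀ θ ∈ Set.Icc (n : ℝ) (n + 1),
      η θ = (θ - n) * η (n + 1) + ((n : ℝ) + 1 - θ) * η n)
    (hlb : ∀ θ : ℝ, 0 ≤ θ → 1 / (2 * (l : ℝ)) ≤ η θ)
    (hdiff : ∀ θ : ℝ, 0 ≤ θ → DifferentiableWithinAt ℝ η (Set.Ici θ) θ)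
    (hder : ∀ θ : ℝ, 0 ≤ θ → derivWithin η (Set.Ici θ) θ ≤
      A * Real.sqrt (η θ) * Real.exp (-Real.sqrt (2 * η θ / K))) :
    ∀ θ : ℝ, 0 ≤ θ → η θ ≤ (K / 2) *
      (Real.log (Real.exp (Real.sqrt (2 * η 0 / K)) + A * Real.sqrt (2 / K) * θ)) ^ 2 := by
  intro θ hθ
  have hlpos : (0:ℝ) < 1 / (2 * (l:ℝ)) := by
    have : (0:ℝ) < (l:ℝ) := by exact_mod_cast lt_of_lt_of_le (by norm_num) hl
    positivity
  have hηpos : ∀ x : ℝ, 0 ≤ x → 0 < η x := fun x hx => lt_of_lt_of_le hlpos (hlb x hx)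
  set F : ℝ → ℝ := fun y => Real.exp (Real.sqrt (2 * y / K)) with hF
  set c : ℝ := A * Real.sqrt (2 / K) with hc
  have hcpos : 0 < c := by
    have : 0 < Real.sqrt (2 / K) := Real.sqrt_pos.mpr (by positivity)
    positivity
  -- derivative of F at a positive point
  have hFderiv : ∀ y : ℝ, 0 < y →
      HasDerivAt F (Real.exp (Real.sqrt (2 * y / K)) *
        (1 / (2 * Real.sqrt (2 * y / K)) * (2 / K))) y := by
    intro y hy
    have h1 : HasDerivAt (fun z : ℝ => 2 * z / K) (2 / K) y := by
      simpa using ((hasDerivAt_id y).const_mul 2).div_const K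
    have h2 : HasDerivAt Real.sqrt (1 / (2 * Real.sqrt (2 * y / K))) (2 * y / K) :=
      Real.hasDerivAt_sqrt (by positivity)
    exact (Real.hasDerivAt_exp _).comp y (h2.comp y h1)
  -- right derivative of F ∘ η
  set f' : ℝ → ℝ := fun x =>
    Real.exp (Real.sqrt (2 * η x / K)) * (1 / (2 * Real.sqrt (2 * η x / K)) * (2 / K)) *
      derivWithin η (Set.Ici x) x with hf'def
  have hfd : ∀ x ∈ Set.Ico (0:ℝ) θ, HasDerivWithinAt (F ∘ η) (f' x) (Set.Ici x) x := by
    intro x hx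
    exact (hFderiv (η x) (hηpos x hx.1)).comp_hasDerivWithinAt x
      (hdiff x hx.1).hasDerivWithinAt
  have h2K : 0 < Real.sqrt (2 * K) := Real.sqrt_pos.mpr (by positivity)
  have hprod : Real.sqrt (2 / K) * Real.sqrt (2 * K) = 2 := by
    rw [← Real.sqrt_mul (by positivity), show (2 / K) * (2 * K) = 2 ^ 2 by field_simp,
      Real.sqrt_sq (by norm_num)]
  -- the bound f' x ≤ c
  have hbound : ∀ x : ℝ, 0 ≤ x → f' x ≤ c := by
    intro x hx
    have hηx := hηpos x hx
    have hu : 0 < 2 * η x / K := by positivity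
    have hsu : 0 < Real.sqrt (2 * η x / K) := Real.sqrt_pos.mpr hu
    have hP : 0 < Real.exp (Real.sqrt (2 * η x / K)) *
        (1 / (2 * Real.sqrt (2 * η x / K)) * (2 / K)) := by positivity
    have h1 : f' x ≤ Real.exp (Real.sqrt (2 * η x / K)) *
        (1 / (2 * Real.sqrt (2 * η x / K)) * (2 / K)) *
        (A * Real.sqrt (η x) * Real.exp (-Real.sqrt (2 * η x / K))) :=
      mul_le_mul_of_nonneg_left (hder x hx) hP.le
    refine h1.trans ?_
    have hexp : Real.exp (Real.sqrt (2 * η x / K)) * Real.exp (-Real.sqrt (2 * η x / K)) = 1 := by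
      rw [← Real.exp_add]; simp
    have hKs : K * Real.sqrt (2 * η x / K) = Real.sqrt (2 * K) * Real.sqrt (η x) := by
      rw [show K * Real.sqrt (2 * η x / K) = Real.sqrt (K ^ 2) * Real.sqrt (2 * η x / K) by
          rw [Real.sqrt_sq hK.le],
        ← Real.sqrt_mul (sq_nonneg K), show K ^ 2 * (2 * η x / K) = (2 * K) * η x by
          field_simp,
        Real.sqrt_mul (by positivity : (0:ℝ) ≤ 2 * K)]
    have hEq : Real.exp (Real.sqrt (2 * η x / K)) *
        (1 / (2 * Real.sqrt (2 * η x / K)) * (2 / K)) *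
        (A * Real.sqrt (η x) * Real.exp (-Real.sqrt (2 * η x / K))) =
        A * Real.sqrt (η x) / (K * Real.sqrt (2 * η x / K)) := by
      rw [show Real.exp (Real.sqrt (2 * η x / K)) *
        (1 / (2 * Real.sqrt (2 * η x / K)) * (2 / K)) *
        (A * Real.sqrt (η x) * Real.exp (-Real.sqrt (2 * η x / K))) =
        (Real.exp (Real.sqrt (2 * η x / K)) * Real.exp (-Real.sqrt (2 * η x / K))) *
          (A * Real.sqrt (η x) * (1 / (2 * Real.sqrt (2 * η x / K)) * (2 / K))) by ring, hexp]
      field_simp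
    rw [hEq, hKs]
    have hsh : 0 < Real.sqrt (η x) := Real.sqrt_pos.mpr hηx
    rw [show A * Real.sqrt (η x) / (Real.sqrt (2 * K) * Real.sqrt (η x)) =
        A / Real.sqrt (2 * K) by field_simp]
    have hs2K : Real.sqrt (2 / K) = 2 / Real.sqrt (2 * K) := by
      rw [eq_div_iff h2K.ne']; exact hprod
    rw [hc, hs2K, div_le_iff₀ h2K, mul_assoc, div_mul_cancel₀ _ h2K.ne']
    linarith
  -- comparison on [0, θ]
  set E : ℝ := Real.exp (Real.sqrt (2 * η 0 / K)) + c * θ with hE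
  have hFcont : Continuous F :=
    Real.continuous_exp.comp (Real.continuous_sqrt.comp
      ((continuous_const.mul continuous_id).div_const K))
  have hcomp : F (η θ) ≤ E := by
    have := image_le_of_deriv_right_le_deriv_boundary
      (f := F ∘ η) (f' := f') (a := 0) (b := θ)
      (hFcont.comp_continuousOn (hcont.mono (Set.Icc_subset_Ici_self)))
      hfd
      (B := fun x => Real.exp (Real.sqrt (2 * η 0 / K)) + c * x) (B' := fun _ => c)
      (by simp [hF])
      ((continuous_const.add (continuous_const.mul continuous_id)).continuousOn)
      (fun x _ => by
        simpa using (((hasDerivAt_id x).const_mul c).const_add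
          (Real.exp (Real.sqrt (2 * η 0 / K)))).hasDerivWithinAt)
      (fun x hx => hbound x hx.1)
      (Set.right_mem_Icc.mpr hθ)
    simpa [hE] using this
  have hEpos : 0 < E := by
    have : 0 ≤ c * θ := mul_nonneg hcpos.le hθ
    have := Real.exp_pos (Real.sqrt (2 * η 0 / K))
    rw [hE]; linarith
  have hlog : Real.sqrt (2 * η θ / K) ≤ Real.log E :=
    (Real.le_log_iff_exp_le hEpos).mpr hcomp
  have hηθ := hηpos θ hθ
  have hsq : 2 * η θ / K ≤ (Real.log E) ^ 2 := by
    have h := pow_le_pow_left₀ (Real.sqrt_nonneg _) hlog 2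
    rwa [Real.sq_sqrt (by positivity)] at h
  have h2 := (div_le_iff₀ hK).mp hsq
  linarith
end

section
/- Abstract growth theorem (iteration step): Let K ≥ 1 be a positive invertible selfadjoint operator on a Hilbert space H, with scale of spaces H^r = D(K^r), and let U(t,s) be a unitary propagator on H⁰ for a family L(t) of selfadjoint operators. Suppose for some 0 < θ ≤ 1 and k ≥ θ a constant C > 0 such that ‖U(t,s)ψ‖_k ≤ ‖ψ‖_k + C ∫_s^t ‖U(t₁,s)ψ‖_{k−θ} dt₁ for all ψ ∈ H^k and s ≤ t. If moreover ‖U(t,s)ψ‖₀ ≤ ‖ψ‖₀, then iterating m = ⌈k/θ⌉ times yields ‖U(t,s)ψ‖_k ≤ C' ⟨t−s⟩^{m} (‖ψ‖_k + ‖ψ‖₀) for a constant C' > 0 and all s ≤ t. -/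
open Real

/-- Abstract growth iteration step: from the step estimate
`‖U(t,s)ψ‖_r ≤ ‖ψ‖_r + C ∫_s^t ‖U(t₁,s)ψ‖_{r−θ} dt₁` (with loss `θ`) and the
`H⁰`-isometry bound, iterating `m = ⌈k/θ⌉` times gives polynomial growth
`‖U(t,s)ψ‖_k ≤ C' ⟨t−s⟩^m (‖ψ‖_k + ‖ψ‖₀)`.  Here `N r ψ` stands for the norm
`‖K^r ψ‖` of the scale generated by `K ≥ 1`, so it is nonnegative and monotone
in `r`, and `⟨t⟩ = (1+t²)^{1/2}`. -/
theorem stmt_14 {H : Type*} [NormedAddCommGroup H] [InnerProductSpace ℝ H]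
    (N : ℝ → H → ℝ) (U : ℝ → ℝ → H → H) (θ k C : ℝ)
    (hθ : 0 < θ) (hθ1 : θ ≤ 1) (hk : θ ≤ k) (hC : 0 < C)
    (hNnonneg : ∀ r ψ, 0 ≤ N r ψ)
    (hNmono : ∀ r r' : ℝ, r ≤ r' → ∀ ψ, N r ψ ≤ N r' ψ)
    (hzero : ∀ s t : ℝ, s ≤ t → ∀ ψ, N 0 (U t s ψ) ≤ N 0 ψ)
    (hstep : ∀ r : ℝ, 0 < r → r ≤ k → ∀ s t : ℝ, s ≤ t → ∀ ψ,
      N r (U t s ψ) ≤ N r ψ + C * ∫ t₁ in s..t, N (max (r - θ) 0) (U t₁ s ψ)) :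
    ∃ C' > 0, ∀ s t : ℝ, s ≤ t → ∀ ψ,
      N k (U t s ψ) ≤
        C' * (1 + (t - s) ^ 2) ^ ((⌈k / θ⌉₊ : ℝ) / 2) * (N k ψ + N 0 ψ) := by
  -- main induction
  have key : ∀ n : ℕ, ∀ r : ℝ, 0 ≤ r → r ≤ k → r ≤ n * θ →
      ∀ s t : ℝ, s ≤ t → ∀ ψ,
      N r (U t s ψ) ≤ (1 + C) ^ n * (1 + (t - s)) ^ n * (N k ψ + N 0 ψ) := by
    intro n
    induction n with
    | zero =>
      intro r hr0 _ hrn s t hst ψ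
      have hr : r = 0 := le_antisymm (by simpa using hrn) hr0
      subst hr
      simp only [pow_zero, one_mul]
      have := hzero s t hst ψ
      have h2 := hNnonneg k ψ
      linarith
    | succ n ih =>
      intro r hr0 hrk hrn s t hst ψ
      set M := N k ψ + N 0 ψ with hM
      have hMnn : 0 ≤ M := add_nonneg (hNnonneg _ _) (hNnonneg _ _)
      set u := t - s with hu
      have hu0 : 0 ≤ u := by simp [hu]; linarith
      have hA1 : (1:ℝ) ≤ (1 + C) ^ n * (1 + u) ^ n := by
        have h1 : (1:ℝ) ≤ (1 + C) ^ n := one_le_pow₀ (by linarith)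
        have h2 : (1:ℝ) ≤ (1 + u) ^ n := one_le_pow₀ (by linarith)
        nlinarith
      rcases eq_or_lt_of_le hr0 with hr | hr
      · -- r = 0
        subst hr
        have := hzero s t hst ψ
        have h2 : N 0 ψ ≤ M := by have := hNnonneg k ψ; simp [hM]; linarith
        calc N 0 (U t s ψ) ≤ M := le_trans this h2
          _ ≤ ((1 + C) ^ n * (1 + u) ^ n) * M := le_mul_of_one_le_left hMnn hA1
          _ ≤ (1 + C) ^ (n+1) * (1 + u) ^ (n+1) * M := by
              have h1 : (1:ℝ) ≤ 1 + C := by linarith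
              have h2 : (1:ℝ) ≤ 1 + u := by linarith
              have ha : (0:ℝ) ≤ (1 + C) ^ n := pow_nonneg (by linarith) n
              have hb : (0:ℝ) ≤ (1 + u) ^ n := pow_nonneg (by linarith) n
              have h3 : (1 + C) ^ n * (1 + u) ^ n ≤
                  ((1 + C) ^ n * (1 + C)) * ((1 + u) ^ n * (1 + u)) :=
                mul_le_mul (le_mul_of_one_le_right ha h1)
                  (le_mul_of_one_le_right hb h2) hb (by positivity)
              rw [pow_succ, pow_succ]
              exact mul_le_mul_of_nonneg_right h3 hMnn
      · -- r > 0
        set r' := max (r - θ) 0 with hr'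
        have hr'0 : 0 ≤ r' := le_max_right _ _
        have hr'k : r' ≤ k := max_le (by linarith) (by linarith)
        have hr'n : r' ≤ n * θ := by
          apply max_le
          · push_cast at hrn ⊢; nlinarith
          · positivity
        set A : ℝ := (1 + C) ^ n * (1 + u) ^ n with hAdef
        have hbound : ∀ t₁ ∈ Set.Icc s t, N r' (U t₁ s ψ) ≤ A * M := by
          intro t₁ ht₁
          have h := ih r' hr'0 hr'k hr'n s t₁ ht₁.1 ψ
          refine h.trans ?_
          have h1 : (1 + (t₁ - s)) ^ n ≤ (1 + u) ^ n := by
            apply pow_le_pow_left₀ (by linarith [ht₁.1]) (by simp [hu]; linarith [ht₁.2])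
          have h2 : (0:ℝ) ≤ (1 + C) ^ n := pow_nonneg (by linarith) n
          rw [hAdef]
          exact mul_le_mul_of_nonneg_right
            (mul_le_mul_of_nonneg_left h1 h2) hMnn
        have hint : (∫ t₁ in s..t, N r' (U t₁ s ψ)) ≤ u * (A * M) := by
          by_cases hI : IntervalIntegrable (fun t₁ => N r' (U t₁ s ψ)) MeasureTheory.volume s t
          · have h4 := intervalIntegral.integral_mono_on hst hI
              (intervalIntegrable_const (c := A * M)) hbound
            calc (∫ t₁ in s..t, N r' (U t₁ s ψ)) ≤ ∫ _t₁ in s..t, (A * M) := h4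
              _ = (t - s) * (A * M) := by
                  rw [intervalIntegral.integral_const, smul_eq_mul]
              _ = u * (A * M) := by rw [hu]
          · rw [intervalIntegral.integral_undef hI]
            have hAM : 0 ≤ A * M := mul_nonneg (by positivity) hMnn
            positivity
        have hNr : N r ψ ≤ M := by
          have := hNmono r k hrk ψ
          have := hNnonneg 0 ψ
          simp [hM]; linarith
        have hmain := hstep r hr hrk s t hst ψ
        have : N r (U t s ψ) ≤ M + C * (u * (A * M)) := by
          have hCint : C * (∫ t₁ in s..t, N r' (U t₁ s ψ)) ≤ C * (u * (A * M)) :=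
            mul_le_mul_of_nonneg_left hint hC.le
          calc N r (U t s ψ) ≤ N r ψ + C * ∫ t₁ in s..t, N (max (r - θ) 0) (U t₁ s ψ) := hmain
            _ = N r ψ + C * ∫ t₁ in s..t, N r' (U t₁ s ψ) := by rw [hr']
            _ ≤ M + C * (u * (A * M)) := by linarith
        refine this.trans ?_
        have hA0 : 0 ≤ A := by positivity
        have expand : (1 + C) ^ (n+1) * (1 + u) ^ (n+1) = A * ((1+C)*(1+u)) := by
          rw [hAdef]; ring
        rw [expand]
        nlinarith [mul_nonneg (mul_nonneg hA0 hC.le) hMnn,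
          mul_nonneg (mul_nonneg hA0 hu0) hMnn,
          mul_nonneg (sub_nonneg.mpr hA1) hMnn]
  -- conclude
  set m := ⌈k / θ⌉₊ with hm
  refine ⟨2 ^ ((m:ℝ)/2) * (1 + C) ^ m, by positivity, ?_⟩
  intro s t hst ψ
  have hkm : k ≤ m * θ := by
    have := Nat.le_ceil (k / θ)
    rw [div_le_iff₀ hθ] at this
    simpa [hm] using this
  have h := key m k (by linarith) le_rfl hkm s t hst ψ
  refine h.trans ?_
  set u := t - s with hu
  have hu0 : 0 ≤ u := by linarith
  have hMnn : 0 ≤ N k ψ + N 0 ψ := add_nonneg (hNnonneg _ _) (hNnonneg _ _)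
  have hpow : (1 + u) ^ m ≤ 2 ^ ((m:ℝ)/2) * (1 + u^2) ^ ((m:ℝ)/2) := by
    have ha : (0:ℝ) ≤ 1 + u := by linarith
    have hsq : (1 + u)^2 ≤ 2 * (1 + u^2) := by nlinarith [sq_nonneg (1 - u)]
    have h1 : (1 + u) ^ m = ((1 + u)^2) ^ ((m:ℝ)/2) := by
      rw [← Real.rpow_natCast (1+u) m, ← Real.rpow_two, ← Real.rpow_mul ha,
        show (2:ℝ) * ((m:ℝ)/2) = (m:ℝ) by ring]
    calc (1 + u) ^ m = ((1 + u)^2) ^ ((m:ℝ)/2) := h1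
      _ ≤ (2 * (1 + u^2)) ^ ((m:ℝ)/2) :=
          Real.rpow_le_rpow (by positivity) hsq (by positivity)
      _ = 2 ^ ((m:ℝ)/2) * (1 + u^2) ^ ((m:ℝ)/2) :=
          Real.mul_rpow (by norm_num) (by positivity)
  have hfin : (1 + C) ^ m * (1 + u) ^ m ≤
      2 ^ ((m:ℝ)/2) * (1 + C) ^ m * ((1 + u^2) ^ ((m:ℝ)/2)) := by
    have h2 := mul_le_mul_of_nonneg_left hpow
      (pow_nonneg (by linarith : (0:ℝ) ≤ 1 + C) m)
    calc (1 + C) ^ m * (1 + u) ^ m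
        ≤ (1 + C) ^ m * (2 ^ ((m:ℝ)/2) * (1 + u^2) ^ ((m:ℝ)/2)) := h2
      _ = 2 ^ ((m:ℝ)/2) * (1 + C) ^ m * ((1 + u^2) ^ ((m:ℝ)/2)) := by ring
  calc (1 + C) ^ m * (1 + u) ^ m * (N k ψ + N 0 ψ)
      ≤ 2 ^ ((m:ℝ)/2) * (1 + C) ^ m * ((1 + u^2) ^ ((m:ℝ)/2)) * (N k ψ + N 0 ψ) :=
        mul_le_mul_of_nonneg_right hfin hMnn
    _ = 2 ^ ((m:ℝ)/2) * (1 + C) ^ m * (1 + u ^ 2) ^ ((m:ℝ)/2) * (N k ψ + N 0 ψ) := by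
        ring
end
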